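/- arXiv:2501.04200 — 2 statements merged into one kernel-verified Lean document; each statement's English description precedes it below -/
import Mathlib

section
/- Let λ be a k-bounded partition of length ℓ, let bot be the bottom of the root ideal Δ^k(λ), and let z ∈ [bot]. Set μ := λ − ε_z ∈ P̃_ℓ^k and d := down_{Δ^k(λ)}(z). Then L_z g̃_λ^{(k)} = g̃_μ^{(k)} − L_d g̃_μ^{(k)} + L_d g̃_λ^{(k)}. -/
open scoped BigOperators

noncomputable section

attribute [local instance] Classical.propDecidable

/-- The ring of symmetric functions over `ℚ`, modeled as the polynomial ring
`ℚ[h₁, h₂, …]` with variable `n` corresponding to the complete homogeneous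
symmetric function `h_{n+1}`. -/
abbrev Lambda : Type := MvPolynomial ℕ ℚ

/-- The complete homogeneous symmetric function `h_m` for `m : ℤ`, with the
conventions `h_m = 0` for `m < 0` and `h_0 = 1`. -/
def hh (m : ℤ) : Lambda :=
  if m < 0 then 0 else if m = 0 then 1 else MvPolynomial.X (m.toNat - 1)

/-- Generalized binomial coefficient `C(n, k)` for `n : ℤ`, `k : ℕ`. -/
def zchoose (n : ℤ) (k : ℕ) : ℤ :=
  if 0 ≤ n then n.toNat.choose k else (-1) ^ k * ((k - 1 - n).toNat.choose k)

/-- `k_m^{(r)} = ∑_{i=0}^m C(r+i-1, i) h_{m-i}` (which is `0` for `m < 0`). -/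
def kk (m : ℤ) (r : ℕ) : Lambda :=
  ∑ i ∈ Finset.range (m.toNat + 1), (zchoose ((r : ℤ) + i - 1) i : ℚ) • hh (m - i)

/-- `g_γ = det (k_{γ_i + j - i}^{(i-1)})_{1 ≤ i,j ≤ ℓ}` (here indices are 1-based;
`γ : ℕ → ℤ` is read on `[1, ℓ]`). -/
def gf (ℓ : ℕ) (γ : ℕ → ℤ) : Lambda :=
  Matrix.det (Matrix.of fun i j : Fin ℓ => kk (γ (i.1 + 1) + (j.1 : ℤ) - (i.1 : ℤ)) i.1)

/-- `Δ⁺_ℓ = {(i,j) : 1 ≤ i < j ≤ ℓ}`. -/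
def Delta (ℓ : ℕ) : Finset (ℕ × ℕ) :=
  (Finset.Icc 1 ℓ ×ˢ Finset.Icc 1 ℓ).filter fun p => p.1 < p.2

/-- A root ideal: an upper order ideal of `Δ⁺_ℓ` for the order
`(a,b) ≤ (c,d) ↔ a ≥ c ∧ b ≤ d`. -/
def IsRootIdeal (ℓ : ℕ) (Ψ : Finset (ℕ × ℕ)) : Prop :=
  Ψ ⊆ Delta ℓ ∧ ∀ p ∈ Ψ, ∀ q ∈ Delta ℓ, q.1 ≤ p.1 → p.2 ≤ q.2 → q ∈ Ψ

/-- standard basis vector `ε_z`. -/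
def eps (z : ℕ) : ℕ → ℤ := fun i => if i = z then 1 else 0

/-- `k_γ := k_{γ_1}^{(0)} ⋯ k_{γ_ℓ}^{(ℓ-1)}`. -/
def kprod (ℓ : ℕ) (γ : ℕ → ℤ) : Lambda :=
  ∏ i ∈ Finset.Icc 1 ℓ, kk (γ i) (i - 1)

/-- The net shift of `γ` produced by applying the raising operators `R_{ij}` for
all `(i,j) ∈ T`. -/
def epsR (T : Finset (ℕ × ℕ)) (i : ℕ) : ℤ :=
  ((T.filter fun p => p.1 = i).card : ℤ) - ((T.filter fun p => p.2 = i).card : ℤ)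

/-- The Katalan function
`K(Ψ; M; γ) = ∏_{z ∈ M} (1 - L_z) ∏_{(i,j) ∈ Ψ} (1 - R_{ij})⁻¹ g_γ`,
written via the equivalent finite expansion
`∏_{z ∈ M} (1 - L_z) ∏_{(i,j) ∈ Δ⁺_ℓ \ Ψ} (1 - R_{ij}) k_γ`. -/
def Katalan (ℓ : ℕ) (Ψ : Finset (ℕ × ℕ)) (M : Multiset ℕ) (γ : ℕ → ℤ) : Lambda :=
  (M.powerset.map fun S =>
    ((-1 : ℚ) ^ Multiset.card S) •
      ∑ T ∈ (Delta ℓ \ Ψ).powerset,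
        ((-1 : ℚ) ^ T.card) • kprod ℓ (fun i => γ i - S.count i + epsR T i)).sum

/-- The multiset `M` is supported in `[ℓ]`. -/
def SuppIn (ℓ : ℕ) (M : Multiset ℕ) : Prop := ∀ x ∈ M, 1 ≤ x ∧ x ≤ ℓ

/-- `L(R)`: the multiset of second components of the roots in `R`. -/
def colMultiset (R : Finset (ℕ × ℕ)) : Multiset ℕ := R.val.map Prod.snd

/-- `Δ^k(μ) = {(i,j) ∈ Δ⁺_ℓ : k - μ_i + i < j}`. -/
def Dk (ℓ k : ℕ) (μ : ℕ → ℤ) : Finset (ℕ × ℕ) :=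
  (Delta ℓ).filter fun p => (k : ℤ) - μ p.1 + (p.1 : ℤ) < (p.2 : ℤ)

/-- The (generalized) closed `k`-Schur Katalan function
`g̃_μ^{(k)} = K(Δ^k(μ); Δ^k(μ); μ)`. -/
def cKS (ℓ k : ℕ) (μ : ℕ → ℤ) : Lambda :=
  Katalan ℓ (Dk ℓ k μ) (colMultiset (Dk ℓ k μ)) μ

/-- `L_z g̃_μ^{(k)} = K(Δ^k(μ); Δ^k(μ); μ - ε_z)`. -/
def Lg (ℓ k : ℕ) (μ : ℕ → ℤ) (z : ℕ) : Lambda :=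
  Katalan ℓ (Dk ℓ k μ) (colMultiset (Dk ℓ k μ)) (fun i => μ i - eps z i)

/-- `μ ∈ P̃_ℓ^k`: `μ_i ≤ k` and `μ_1 + ℓ - 1 ≥ μ_2 + ℓ - 2 ≥ ⋯ ≥ μ_ℓ`. -/
def tP (ℓ k : ℕ) (μ : ℕ → ℤ) : Prop :=
  (∀ i, 1 ≤ i → i ≤ ℓ → μ i ≤ k) ∧ ∀ i, 1 ≤ i → i + 1 ≤ ℓ → μ (i + 1) ≤ μ i + 1

/-- `λ ∈ P_ℓ^k`: a `k`-bounded partition of length `ℓ` (weakly decreasing,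
parts in `[0, k]`, vanishing beyond row `ℓ`). -/
def IsPartition (ℓ k : ℕ) (lam : ℕ → ℤ) : Prop :=
  (∀ i, 1 ≤ i → i ≤ ℓ → 0 ≤ lam i ∧ lam i ≤ (k : ℤ)) ∧
  (∀ i, 1 ≤ i → lam (i + 1) ≤ lam i) ∧ (∀ i, ℓ < i → lam i = 0)

/-- `|λ|`, the size. -/
def psize (ℓ : ℕ) (lam : ℕ → ℤ) : ℤ := ∑ i ∈ Finset.Icc 1 ℓ, lam i

/-- A removable root of `Ψ`. -/
def Removable (ℓ : ℕ) (Ψ : Finset (ℕ × ℕ)) (p : ℕ × ℕ) : Prop :=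
  p ∈ Ψ ∧ IsRootIdeal ℓ (Ψ.erase p)

/-- An addable root of `Ψ`. -/
def Addable (ℓ : ℕ) (Ψ : Finset (ℕ × ℕ)) (p : ℕ × ℕ) : Prop :=
  p ∈ Delta ℓ ∧ p ∉ Ψ ∧ IsRootIdeal ℓ (insert p Ψ)

/-- Row `r` of `Ψ`. -/
def rowSet (Ψ : Finset (ℕ × ℕ)) (r : ℕ) : Finset ℕ :=
  (Ψ.filter fun p => p.1 = r).image Prod.snd

/-- Column `c` of `Ψ`. -/
def colSet (Ψ : Finset (ℕ × ℕ)) (c : ℕ) : Finset ℕ :=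
  (Ψ.filter fun p => p.2 = c).image Prod.fst

/-- `Ψ` has a wall in rows `r, r+1`. -/
def HasWall (Ψ : Finset (ℕ × ℕ)) (r : ℕ) : Prop :=
  (rowSet Ψ r).card = (rowSet Ψ (r + 1)).card

/-- `Ψ` has a ceiling in columns `c, c+1`. -/
def HasCeiling (Ψ : Finset (ℕ × ℕ)) (c : ℕ) : Prop :=
  (colSet Ψ c).card = (colSet Ψ (c + 1)).card

/-- `Ψ` has a mirror in rows `r, r+1`. -/
def HasMirror (ℓ : ℕ) (Ψ : Finset (ℕ × ℕ)) (r : ℕ) : Prop :=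
  ∃ c, r + 2 ≤ c ∧ c ≤ ℓ - 1 ∧ Removable ℓ Ψ (r, c) ∧ Removable ℓ Ψ (r + 1, c + 1)

/-- `b` is the bottom row of the root ideal `Ψ` (with `b = 0` if `Ψ = ∅`). -/
def IsBottom (Ψ : Finset (ℕ × ℕ)) (b : ℕ) : Prop :=
  (∀ p ∈ Ψ, p.1 ≤ b) ∧ (b = 0 ∨ ∃ q, (b, q) ∈ Ψ)

/-- `downStep ℓ Ψ x j` means `down_Ψ(x) = j`, i.e. `(x,j)` is a removable root. -/
def downStep (ℓ : ℕ) (Ψ : Finset (ℕ × ℕ)) (x j : ℕ) : Prop := Removable ℓ Ψ (x, j)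

/-- Being in the same bounce path of `Ψ`. -/
def SamePath (ℓ : ℕ) (Ψ : Finset (ℕ × ℕ)) : ℕ → ℕ → Prop :=
  Relation.EqvGen (downStep ℓ Ψ)

/-- `top_Ψ(x)`: the minimum vertex of the bounce path of `Ψ` containing `x`. -/
def topV (ℓ : ℕ) (Ψ : Finset (ℕ × ℕ)) (x : ℕ) : ℕ := sInf {y | SamePath ℓ Ψ y x}

/-- The algebra homomorphism `Λ → Λ[t]`, `f ↦ ∑_d (e_d^⊥ f) t^d`; it is the
unique algebra map sending `h_m ↦ h_m + t h_{m-1}`. -/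
def Eop : Lambda →ₐ[ℚ] Polynomial Lambda :=
  MvPolynomial.aeval fun n =>
    Polynomial.C (MvPolynomial.X n) + Polynomial.X * Polynomial.C (hh (n : ℤ))

/-- `e_d^⊥`, the Hall-adjoint of multiplication by the elementary symmetric
function `e_d`. -/
def eperp (d : ℕ) (f : Lambda) : Lambda := (Eop f).coeff d

/-- `G_{1^m}^⊥ = ∑_{i ≥ 0} (-1)^i C(m-1+i, m-1) e_{m+i}^⊥`, the Hall-adjoint of
multiplication by the stable Grothendieck polynomial `G_{1^m}`. -/
def Gperp (m : ℕ) (f : Lambda) : Lambda :=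
  (Eop f).sum fun d c =>
    (if m ≤ d then
        ((-1 : ℚ)) ^ (d - m) * ((zchoose ((m : ℤ) - 1 + ((d - m : ℕ) : ℤ)) (d - m) : ℤ) : ℚ)
      else 0) • c


/-!
Removing the removable root `(z, d)` from `Δ^k(λ)` is the same as lowering `λ_z` by one, so
`Δ^k(μ) = Δ^k(λ) ∖ {(z, d)}` and the column multiset of `Δ^k(λ)` is that of `Δ^k(μ)` plus one
copy of `d`. In the finite expansion of a Katalan function, one extra lowering factor `1 - L_c`
and one extra raising factor `1 - R_{ac}` each split it into a difference of two Katalan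
functions; expanding all four terms of the identity this way, everything cancels.
-/

lemma epsR_insert {a c : ℕ} {T : Finset (ℕ × ℕ)} (hT : (a, c) ∉ T) :
    epsR (insert (a, c) T) = epsR T + eps a - eps c := by
  have hcard (f : ℕ × ℕ → ℕ) (x i : ℕ) (hx : f (a, c) = x) :
      (((insert (a, c) T).filter fun q => f q = i).card : ℤ)
        = ((T.filter fun q => f q = i).card : ℤ) + eps x i := by
    rw [Finset.filter_insert, eps]
    by_cases hi : i = x
    · subst hi
      rw [if_pos hx, if_pos rfl,
        Finset.card_insert_of_notMem fun h => hT (Finset.mem_filter.1 h).1]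
      push_cast
      ring
    · rw [if_neg (hx ▸ Ne.symm hi), if_neg hi, add_zero]
  funext i
  simp only [epsR, hcard Prod.fst a i rfl, hcard Prod.snd c i rfl, Pi.add_apply, Pi.sub_apply]
  ring

lemma Katalan_cons (ℓ : ℕ) (Ψ : Finset (ℕ × ℕ)) (c : ℕ) (M : Multiset ℕ) (γ : ℕ → ℤ) :
    Katalan ℓ Ψ (c ::ₘ M) γ = Katalan ℓ Ψ M γ - Katalan ℓ Ψ M (γ - eps c) := by
  have hcons (S : Multiset ℕ) :
      ((-1 : ℚ) ^ Multiset.card (c ::ₘ S)) •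
          ∑ T ∈ (Delta ℓ \ Ψ).powerset,
            ((-1 : ℚ) ^ T.card) • kprod ℓ (fun i => γ i - (c ::ₘ S).count i + epsR T i)
        = -(((-1 : ℚ) ^ Multiset.card S) •
          ∑ T ∈ (Delta ℓ \ Ψ).powerset,
            ((-1 : ℚ) ^ T.card) • kprod ℓ (fun i => (γ - eps c) i - S.count i + epsR T i)) := by
    have hshift (T : Finset (ℕ × ℕ)) :
        (fun i => γ i - (c ::ₘ S).count i + epsR T i)
          = fun i => (γ - eps c) i - S.count i + epsR T i := by
      funext i
      simp only [Multiset.count_cons, eps, Pi.sub_apply]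
      push_cast
      ring
    simp only [hshift, Multiset.card_cons, pow_succ, mul_smul, neg_one_smul, smul_neg]
  simp only [Katalan, Multiset.powerset_cons, Multiset.map_add, Multiset.sum_add,
    Multiset.map_map, Function.comp_def, hcons, Multiset.sum_map_neg, ← sub_eq_add_neg]

lemma Katalan_erase (ℓ : ℕ) {Ψ : Finset (ℕ × ℕ)} (M : Multiset ℕ) (γ : ℕ → ℤ) {a c : ℕ}
    (hΨ : (a, c) ∈ Ψ) (hΔ : (a, c) ∈ Delta ℓ) :
    Katalan ℓ (Ψ.erase (a, c)) M γ
      = Katalan ℓ Ψ M γ - Katalan ℓ Ψ M (γ + eps a - eps c) := by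
  have hnotMem : (a, c) ∉ Delta ℓ \ Ψ := fun h => (Finset.mem_sdiff.1 h).2 hΨ
  have hraise (S : Multiset ℕ) (T : Finset (ℕ × ℕ)) (hT : T ∈ (Delta ℓ \ Ψ).powerset) :
      ((-1 : ℚ) ^ (insert (a, c) T).card) •
          kprod ℓ (fun i => γ i - S.count i + epsR (insert (a, c) T) i)
        = -(((-1 : ℚ) ^ T.card) •
          kprod ℓ (fun i => (γ + eps a - eps c) i - S.count i + epsR T i)) := by
    have hT' : (a, c) ∉ T := fun h => hnotMem (Finset.mem_powerset.1 hT h)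
    have hshift : (fun i => γ i - S.count i + epsR (insert (a, c) T) i)
        = fun i => (γ + eps a - eps c) i - S.count i + epsR T i := by
      funext i
      simp only [epsR_insert hT', Pi.add_apply, Pi.sub_apply]
      ring
    rw [hshift, Finset.card_insert_of_notMem hT', pow_succ, mul_smul, neg_one_smul, smul_neg]
  simp only [Katalan, Finset.sdiff_erase hΔ]
  rw [← Multiset.sum_map_sub]
  refine congrArg Multiset.sum (Multiset.map_congr rfl fun S _ => ?_)
  rw [Finset.sum_powerset_insert hnotMem, Finset.sum_congr rfl (hraise S),
    Finset.sum_neg_distrib, smul_add, smul_neg, ← sub_eq_add_neg]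

lemma Katalan_cons_sub_eps (ℓ : ℕ) {Ψ : Finset (ℕ × ℕ)} (M : Multiset ℕ) (γ : ℕ → ℤ) {a c : ℕ}
    (hΨ : (a, c) ∈ Ψ) (hΔ : (a, c) ∈ Delta ℓ) :
    Katalan ℓ Ψ (c ::ₘ M) (γ - eps a)
      = Katalan ℓ (Ψ.erase (a, c)) M (γ - eps a)
        - Katalan ℓ (Ψ.erase (a, c)) M (γ - eps a - eps c)
        + Katalan ℓ Ψ (c ::ₘ M) (γ - eps c) := by
  rw [Katalan_cons, Katalan_cons, Katalan_erase ℓ M _ hΨ hΔ, Katalan_erase ℓ M _ hΨ hΔ,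
    sub_add_cancel, show γ - eps a - eps c + eps a - eps c = γ - eps c - eps c by abel]
  abel

lemma colMultiset_eq_cons_erase {Ψ : Finset (ℕ × ℕ)} {r : ℕ × ℕ} (hr : r ∈ Ψ) :
    colMultiset Ψ = r.2 ::ₘ colMultiset (Ψ.erase r) := by
  rw [colMultiset, colMultiset, Finset.erase_val, ← Multiset.map_cons, Multiset.cons_erase hr]

lemma mem_Dk {ℓ k : ℕ} {μ : ℕ → ℤ} {i j : ℕ} :
    (i, j) ∈ Dk ℓ k μ ↔
      ((1 ≤ i ∧ i ≤ ℓ) ∧ (1 ≤ j ∧ j ≤ ℓ) ∧ i < j) ∧ (k : ℤ) - μ i + i < j := by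
  simp only [Dk, Delta, Finset.mem_filter, Finset.mem_product, Finset.mem_Icc]
  tauto

lemma Dk_sub_eps_eq_erase {ℓ k : ℕ} {lam : ℕ → ℤ} {z d : ℕ} (hz : lam z ≤ k)
    (hd : Removable ℓ (Dk ℓ k lam) (z, d)) :
    Dk ℓ k (lam - eps z) = (Dk ℓ k lam).erase (z, d) := by
  obtain ⟨hmem, -, hideal⟩ := hd
  obtain ⟨⟨⟨hz1, hzℓ⟩, ⟨-, hdℓ⟩, hzd⟩, hlt⟩ := mem_Dk.1 hmem
  -- removability forces `(z, d)` to be the leftmost root of row `z`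
  have hdeq : (d : ℤ) = k - lam z + z + 1 := by
    by_contra hne
    have hprev : (z, d - 1) ∈ (Dk ℓ k lam).erase (z, d) :=
      Finset.mem_erase.2 ⟨by simp only [ne_eq, Prod.mk.injEq]; omega, mem_Dk.2 ⟨⟨⟨hz1, hzℓ⟩, by omega, by omega⟩, by omega⟩⟩
    exact Finset.notMem_erase _ _
      (hideal _ hprev _ (Finset.mem_filter.1 hmem).1 le_rfl (Nat.sub_le d 1))
  ext ⟨i, j⟩
  rw [Finset.mem_erase, mem_Dk, mem_Dk]
  by_cases hiz : i = z
  · subst hiz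
    simp only [Pi.sub_apply, eps, if_pos, ne_eq, Prod.mk.injEq, true_and]
    omega
  · simp [eps, hiz]

lemma IsPartition.tP_sub_eps {ℓ k : ℕ} {lam : ℕ → ℤ} (hlam : IsPartition ℓ k lam) (z : ℕ) :
    tP ℓ k (lam - eps z) := by
  obtain ⟨hbd, hmono, -⟩ := hlam
  refine ⟨fun i hi hiℓ => ?_, fun i hi _ => ?_⟩
  · have := (hbd i hi hiℓ).2
    simp only [Pi.sub_apply, eps]
    split_ifs <;> omega
  · have := hmono i hi
    simp only [Pi.sub_apply, eps]
    split_ifs <;> omega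

theorem Lg_within_bottom_general (ℓ k : ℕ) (lam : ℕ → ℤ) (hlam : IsPartition ℓ k lam)
    (z : ℕ) (d : ℕ)
    (hd : Removable ℓ (Dk ℓ k lam) (z, d)) :
    tP ℓ k (fun i => lam i - eps z i) ∧
    Lg ℓ k lam z =
      cKS ℓ k (fun i => lam i - eps z i) -
        Lg ℓ k (fun i => lam i - eps z i) d + Lg ℓ k lam d := by
  have hzk : lam z ≤ k := by
    obtain ⟨⟨⟨hz1, hzℓ⟩, -⟩, -⟩ := mem_Dk.1 hd.1
    exact (hlam.1 z hz1 hzℓ).2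
  refine ⟨hlam.tP_sub_eps z, ?_⟩
  rw [show (fun i => lam i - eps z i) = lam - eps z from rfl, Lg, Lg, Lg, cKS,
    Dk_sub_eps_eq_erase hzk hd, colMultiset_eq_cons_erase hd.1]
  exact Katalan_cons_sub_eps ℓ _ lam hd.1 (Finset.filter_subset _ _ hd.1)

/-- For `λ ∈ P_ℓ^k`, `z ∈ [bot]` and `d = down_{Δ^k(λ)}(z)`, we have
`μ := λ - ε_z ∈ P̃_ℓ^k` and
`L_z g̃_λ^{(k)} = g̃_μ^{(k)} - L_d g̃_μ^{(k)} + L_d g̃_λ^{(k)}`. -/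
theorem Lg_within_bottom (ℓ k : ℕ) (lam : ℕ → ℤ) (hlam : IsPartition ℓ k lam)
    (b : ℕ) (hb : IsBottom (Dk ℓ k lam) b) (z : ℕ)
    (hz1 : 1 ≤ z) (hz2 : z ≤ b) (d : ℕ)
    (hd : Removable ℓ (Dk ℓ k lam) (z, d)) :
    tP ℓ k (fun i => lam i - eps z i) ∧
    Lg ℓ k lam z =
      cKS ℓ k (fun i => lam i - eps z i) -
        Lg ℓ k (fun i => lam i - eps z i) d + Lg ℓ k lam d :=
  Lg_within_bottom_general ℓ k lam hlam z d hd
end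
end

section
/- Let λ be a partition of length ℓ. Then G_{1^ℓ}^⊥ g_λ = g_{λ − 1^ℓ}, where G_{1^m} := ∑_{i≥0} (−1)^i C(m−1+i, m−1) e_{m+i} is a stable Grothendieck polynomial, g_λ := det(k_{λ_i+j−i}^{(i−1)})_{1≤i,j≤ℓ} is a dual stable Grothendieck polynomial, λ − 1^ℓ is obtained by subtracting 1 from every part of λ, and f^⊥ denotes the adjoint of multiplication by f under the Hall inner product. -/
open scoped BigOperators

noncomputable section

attribute [local instance] Classical.propDecidable

/-! `Eop` is the algebra map `f ↦ ∑_d (e_d^⊥ f) t^d`, and it sends each entry `k_m^{(r)}` of the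
matrix defining `g_γ` to `k_m^{(r)} + t k_{m-1}^{(r)}`. So `Eop g_γ` is the determinant of a
matrix that is linear in `t`: it has degree at most `ℓ`, and its coefficient of `t^ℓ` is the
determinant of the matrix of `t`-coefficients, namely `g_{γ - 1^ℓ}`. Since `G_{1^ℓ}^⊥` only
involves the `e_d^⊥` with `d ≥ ℓ`, with coefficient `1` at `d = ℓ`, it acts on `g_γ` as
`e_ℓ^⊥`. -/

open Polynomial

lemma hh_of_neg {m : ℤ} (hm : m < 0) : hh m = 0 := if_pos hm

lemma Eop_hh (m : ℤ) : Eop (hh m) = C (hh m) + X * C (hh (m - 1)) := by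
  rcases lt_trichotomy m 0 with hm | rfl | hm
  · simp [hh_of_neg hm, hh_of_neg (show m - 1 < 0 by omega)]
  · simp [hh, Eop]
  · have hpred : ((m.toNat - 1 : ℕ) : ℤ) = m - 1 := by omega
    simp only [hh, Eop, MvPolynomial.aeval_X, hpred, hm.ne', not_lt.mpr hm.le, if_false]

lemma kk_eq_sum_range {m : ℤ} {N : ℕ} (hN : m.toNat ≤ N) (r : ℕ) :
    kk m r = ∑ i ∈ Finset.range (N + 1), (zchoose ((r : ℤ) + i - 1) i : ℚ) • hh (m - i) := by
  refine Finset.sum_subset (Finset.range_subset_range.mpr (by omega)) fun i _ hi => ?_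
  rw [Finset.mem_range, not_lt] at hi
  rw [hh_of_neg (by omega), smul_zero]

lemma Eop_kk (m : ℤ) (r : ℕ) : Eop (kk m r) = C (kk m r) + X * C (kk (m - 1) r) := by
  rw [kk_eq_sum_range (m := m - 1) (N := m.toNat) (by omega) r, kk, map_sum, map_sum, map_sum,
    Finset.mul_sum, ← Finset.sum_add_distrib]
  refine Finset.sum_congr rfl fun i _ => ?_
  rw [map_smul, Eop_hh, smul_add, ← smul_C, ← smul_C, mul_smul_comm, sub_right_comm]

def kMatrix (ℓ : ℕ) (γ : ℕ → ℤ) : Matrix (Fin ℓ) (Fin ℓ) Lambda :=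
  Matrix.of fun i j => kk (γ (i.1 + 1) + (j.1 : ℤ) - (i.1 : ℤ)) i.1

lemma gf_eq_det_kMatrix (ℓ : ℕ) (γ : ℕ → ℤ) : gf ℓ γ = (kMatrix ℓ γ).det := rfl

lemma Eop_gf (ℓ : ℕ) (γ : ℕ → ℤ) :
    Eop (gf ℓ γ) =
      ((X : Lambda[X]) • (kMatrix ℓ fun i => γ i - 1).map C + (kMatrix ℓ γ).map C).det := by
  rw [gf_eq_det_kMatrix, ← AlgHom.coe_toRingHom, RingHom.map_det]
  congr 1
  ext i j : 1
  simp only [RingHom.mapMatrix_apply, Matrix.map_apply, Matrix.add_apply, Matrix.smul_apply,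
    kMatrix, Matrix.of_apply, AlgHom.coe_toRingHom, Eop_kk, smul_eq_mul]
  rw [add_comm, sub_right_comm _ (i.1 : ℤ), add_sub_right_comm (γ (i.1 + 1))]

lemma natDegree_Eop_gf_le (ℓ : ℕ) (γ : ℕ → ℤ) : (Eop (gf ℓ γ)).natDegree ≤ ℓ := by
  simpa [Eop_gf] using natDegree_det_X_add_C_le (kMatrix ℓ fun i => γ i - 1) (kMatrix ℓ γ)

lemma eperp_self_gf (ℓ : ℕ) (γ : ℕ → ℤ) : eperp ℓ (gf ℓ γ) = gf ℓ fun i => γ i - 1 := by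
  rw [eperp, Eop_gf, gf_eq_det_kMatrix]
  simpa using coeff_det_X_add_C_card (kMatrix ℓ fun i => γ i - 1) (kMatrix ℓ γ)

lemma zchoose_zero (n : ℤ) : zchoose n 0 = 1 := by
  unfold zchoose
  split_ifs <;> simp

lemma Gperp_eq_eperp_of_natDegree_le {m : ℕ} {f : Lambda} (hf : (Eop f).natDegree ≤ m) :
    Gperp m f = eperp m f := by
  rw [Gperp, sum_over_range' _ (fun _ => smul_zero _) (m + 1) (Nat.lt_succ_of_le hf),
    Finset.sum_range_succ, Finset.sum_eq_zero fun d hd => ?_]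
  · simp [eperp, zchoose_zero]
  · rw [if_neg (not_le.mpr (Finset.mem_range.mp hd)), zero_smul]

theorem Gperp_g_general (ℓ : ℕ) (lam : ℕ → ℤ) :
    Gperp ℓ (gf ℓ lam) = gf ℓ (fun i => lam i - 1) := by
  rw [Gperp_eq_eperp_of_natDegree_le (natDegree_Eop_gf_le ℓ lam), eperp_self_gf]

/-- For a partition `λ` of length `ℓ`, `G_{1^ℓ}^⊥ g_λ = g_{λ - 1^ℓ}`. -/
theorem Gperp_g (ℓ : ℕ) (lam : ℕ → ℤ)
    (h1 : ∀ i, 1 ≤ i → i ≤ ℓ → 0 ≤ lam i)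
    (h2 : ∀ i, 1 ≤ i → lam (i + 1) ≤ lam i)
    (h3 : ∀ i, ℓ < i → lam i = 0) :
    Gperp ℓ (gf ℓ lam) = gf ℓ (fun i => lam i - 1) :=
  Gperp_g_general ℓ lam

end
end
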